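/- arXiv:2010.11161 — 3 statements merged into one kernel-verified Lean document; each statement's English description precedes it below -/
import Mathlib

section
/- In SL(2,ℤ), the elements A·B and (A·B)⁵ are not conjugate: there is no P ∈ SL(2,ℤ) with P(A·B)P⁻¹ = (A·B)⁵. Hence the two order-6 elements A·B and (A·B)⁵ represent two distinct conjugacy classes of order-6 elements. -/
/-! An element `M = [[a,b],[c,d]]` of `SL(2,R)` with `(a + d)² < 4` is elliptic. The lower-left
entry of `P M P⁻¹` is the value of the binary quadratic form `c x² + (a - d) x y - b y²` at
`(s, r)`, where `(r, s)` is the bottom row of `P`. This form has discriminant `(a + d)² - 4 < 0`,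
so it is definite with the sign of `c`: conjugation preserves the sign of the lower-left entry of
an elliptic element. Now `A B = [[0,1],[-1,1]]` is elliptic with lower-left entry `-1`, while
`(A B)⁵ = (A B)⁻¹ = [[1,-1],[1,0]]` has lower-left entry `1`. -/

/-- The matrix `A = [[1,1],[0,1]]` as an element of `SL(2,ℤ)`. -/
def A : Matrix.SpecialLinearGroup (Fin 2) ℤ :=
  ⟨!![1, 1; 0, 1], by norm_num [Matrix.det_fin_two_of]⟩

/-- The matrix `B = [[1,0],[-1,1]]` as an element of `SL(2,ℤ)`. -/
def B : Matrix.SpecialLinearGroup (Fin 2) ℤ :=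
  ⟨!![1, 0; -1, 1], by norm_num [Matrix.det_fin_two_of]⟩

theorem mul_quadForm_pos_of_discrim_neg {R : Type*} [CommRing R] [LinearOrder R]
    [IsStrictOrderedRing R] {a b c x y : R} (hd : discrim a b c < 0) (hxy : x ≠ 0 ∨ y ≠ 0) :
    0 < a * (a * x ^ 2 + b * x * y + c * y ^ 2) := by
  have hsq : 4 * (a * (a * x ^ 2 + b * x * y + c * y ^ 2)) =
      (2 * a * x + b * y) ^ 2 - discrim a b c * y ^ 2 := by
    rw [discrim]; ring
  have ha : a ≠ 0 := by
    rintro rfl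
    rw [discrim] at hd
    nlinarith [sq_nonneg b]
  by_cases hy : y = 0
  · have hx : x ≠ 0 := hxy.resolve_right (not_not.mpr hy)
    subst hy
    nlinarith [sq_pos_of_ne_zero (mul_ne_zero ha hx)]
  · nlinarith [sq_nonneg (2 * a * x + b * y), sq_pos_of_ne_zero hy]

namespace Matrix.SpecialLinearGroup

variable {R : Type*} [CommRing R]

theorem conj_apply_one_zero (M P : SpecialLinearGroup (Fin 2) R) :
    (P * M * P⁻¹) 1 0 =
      M 1 0 * P 1 1 ^ 2 + (M 0 0 - M 1 1) * P 1 1 * P 1 0 + -M 0 1 * P 1 0 ^ 2 := by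
  simp only [coe_mul, coe_inv, adjugate_fin_two, mul_apply, Fin.sum_univ_two, of_apply,
    cons_val', cons_val_zero, cons_val_one, empty_val', cons_val_fin_one]
  ring

theorem apply_one_one_ne_zero_or_apply_one_zero_ne_zero [Nontrivial R]
    (P : SpecialLinearGroup (Fin 2) R) : P 1 1 ≠ 0 ∨ P 1 0 ≠ 0 := by
  have h := P.det_coe
  rw [det_fin_two] at h
  by_contra! h0
  simp [h0.1, h0.2] at h

theorem apply_one_zero_mul_conj_apply_one_zero_pos [LinearOrder R] [IsStrictOrderedRing R]
    (M P : SpecialLinearGroup (Fin 2) R) (hM : (M : Matrix (Fin 2) (Fin 2) R).trace ^ 2 < 4) :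
    0 < M 1 0 * (P * M * P⁻¹) 1 0 := by
  have hdet := M.det_coe
  rw [det_fin_two] at hdet
  rw [trace_fin_two] at hM
  have hd : discrim (M 1 0) (M 0 0 - M 1 1) (-M 0 1) < 0 := by
    rw [discrim]; linear_combination hM - 4 * hdet
  rw [conj_apply_one_zero]
  exact mul_quadForm_pos_of_discrim_neg hd P.apply_one_one_ne_zero_or_apply_one_zero_ne_zero

end Matrix.SpecialLinearGroup

theorem coe_A_mul_B : ((A * B : Matrix.SpecialLinearGroup (Fin 2) ℤ) : Matrix (Fin 2) (Fin 2) ℤ) =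
    !![0, 1; -1, 1] := by
  decide

theorem coe_A_mul_B_pow_five :
    (((A * B) ^ 5 : Matrix.SpecialLinearGroup (Fin 2) ℤ) : Matrix (Fin 2) (Fin 2) ℤ) =
      !![1, -1; 1, 0] := by
  decide

/-- In `SL(2,ℤ)`, the order-6 elements `A·B` and `(A·B)⁵` are not conjugate: there is no
`P ∈ SL(2,ℤ)` with `P(A·B)P⁻¹ = (A·B)⁵`. -/
theorem not_conj_A_mul_B_pow_five :
    ¬ ∃ P : Matrix.SpecialLinearGroup (Fin 2) ℤ, P * (A * B) * P⁻¹ = (A * B) ^ 5 := by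
  rintro ⟨P, hP⟩
  have hpos := (A * B).apply_one_zero_mul_conj_apply_one_zero_pos P
    (by rw [coe_A_mul_B, Matrix.trace_fin_two_of]; norm_num)
  rw [hP, coe_A_mul_B, coe_A_mul_B_pow_five] at hpos
  simp at hpos
end

section
/- In SL(2,ℤ), the elements A²·B and (A²·B)³ are not conjugate: there is no P ∈ SL(2,ℤ) with P(A²·B)P⁻¹ = (A²·B)³. Hence the two order-4 elements A²·B and (A²·B)³ represent two distinct conjugacy classes of order-4 elements. -/
open Matrix

theorem det_nonpos_of_mul_eq_neg_mul {R : Type*} [CommRing R] [LinearOrder R]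
    [IsStrictOrderedRing R] (P : Matrix (Fin 2) (Fin 2) R)
    (h : P * !![-1, 2; -1, 1] = -(!![-1, 2; -1, 1] * P)) : P.det ≤ 0 := by
  obtain ⟨a, b, c, d, rfl⟩ : ∃ a b c d : R, P = !![a, b; c, d] := ⟨_, _, _, _, P.eta_fin_two⟩
  simp only [mul_fin_two, neg_of, EmbeddingLike.apply_eq_iff_eq, neg_cons, neg_empty, vecCons_inj,
    and_true] at h
  obtain ⟨⟨h00, h01⟩, -⟩ := h
  have hb : b = 2 * c - 2 * a := by linear_combination -h00
  have hd : d = -a := mul_left_cancel₀ two_ne_zero (by linear_combination h01)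
  calc !![a, b; c, d].det = -((a - c) ^ 2 + c ^ 2) := by rw [det_fin_two_of, hb, hd]; ring
    _ ≤ 0 := by nlinarith [sq_nonneg (a - c), sq_nonneg c]

theorem coe_A_sq_mul_B : ((A ^ 2 * B : SpecialLinearGroup (Fin 2) ℤ) : Matrix (Fin 2) (Fin 2) ℤ)
    = !![-1, 2; -1, 1] := by
  ext i j; fin_cases i <;> fin_cases j <;> rfl

theorem A_sq_mul_B_pow_three : (A ^ 2 * B) ^ 3 = -(A ^ 2 * B) := by
  ext i j; fin_cases i <;> fin_cases j <;> rfl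

/-- In `SL(2,ℤ)`, the order-4 elements `A²·B` and `(A²·B)³` are not conjugate: there is
no `P ∈ SL(2,ℤ)` with `P(A²·B)P⁻¹ = (A²·B)³`. -/
theorem not_conj_A_sq_mul_B_pow_three :
    ¬ ∃ P : Matrix.SpecialLinearGroup (Fin 2) ℤ,
      P * (A ^ 2 * B) * P⁻¹ = (A ^ 2 * B) ^ 3 := by
  rintro ⟨P, hP⟩
  rw [A_sq_mul_B_pow_three, mul_inv_eq_iff_eq_mul, neg_mul] at hP
  have hM := congrArg (fun g : SpecialLinearGroup (Fin 2) ℤ => (g : Matrix (Fin 2) (Fin 2) ℤ)) hP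
  simp only [Matrix.SpecialLinearGroup.coe_neg, Matrix.SpecialLinearGroup.coe_mul P,
    Matrix.SpecialLinearGroup.coe_mul _ P, coe_A_sq_mul_B] at hM
  have hdet := det_nonpos_of_mul_eq_neg_mul _ hM
  rw [Matrix.SpecialLinearGroup.det_coe] at hdet
  exact one_pos.not_ge hdet
end

section
/- Every nontrivial finite-order element of SL(2,ℤ) is conjugate in SL(2,ℤ) to exactly one of the seven elements A·B, (A·B)², (A·B)³, (A·B)⁴, (A·B)⁵, A²·B, (A²·B)³. -/
/-!
By Cayley–Hamilton the traces `tₙ` of the powers of `M ∈ SL(2,ℤ)` satisfy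
`tₙ₊₂ = t₁ tₙ₊₁ - tₙ` with `t₀ = 2`, so for `|t₁| ≥ 3` their absolute values increase strictly
and `M` has infinite order; for `t₁ = ±2`, `±M` is unipotent, so finite order forces `M = ±1`.

For `t² < 4` the lower-left entry of `g M g⁻¹` is the value at the bottom row of `g` of the form
`c x² + (a - d) x y - b y²` of discriminant `t² - 4 < 0`; the form is definite, so the sign of `c`
is a conjugacy invariant. Gauss reduction (translate by a power of `T` until `|a - d| ≤ c`, then
conjugate by `S`) lowers `c > 0` until `c = 1`, where `M` is conjugate to `S Tᵗ`; for `c < 0`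
apply this to `M⁻¹`. Hence the trace and the sign of `c` form a complete invariant, and the seven
elements realise each of the six pairs `(t, sign c)` with `t ∈ {-1, 0, 1}`, besides `-1 = (AB)³`,
exactly once.
-/

open Matrix MatrixGroups ModularGroup Matrix.SpecialLinearGroup

local notation:1024 "↑ₘ" g:1024 => ((g : SL(2, ℤ)) : Matrix (Fin 2) (Fin 2) ℤ)

lemma IsConj.of_inv {G : Type*} [Group G] {a b : G} (h : IsConj a⁻¹ b⁻¹) : IsConj a b := by
  obtain ⟨c, hc⟩ := isConj_iff.1 h
  exact isConj_iff.2 ⟨c, by rw [← inv_inv b, ← hc, conj_inv, inv_inv]⟩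

lemma Int.exists_abs_add_two_mul_mul_le (x : ℤ) {m : ℤ} (hm : 0 < m) :
    ∃ j : ℤ, |x + 2 * j * m| ≤ m := by
  have hdiv := Int.emod_add_mul_ediv (x + m) (2 * m)
  have hlo := Int.emod_nonneg (x + m) (by omega : 2 * m ≠ 0)
  have hhi := Int.emod_lt_of_pos (x + m) (by omega : 0 < 2 * m)
  exact ⟨-((x + m) / (2 * m)), abs_le.2 ⟨by linarith, by linarith⟩⟩

lemma Int.strictMono_abs_of_lucas {t : ℤ} (ht : 3 ≤ |t|) {f : ℕ → ℤ} (h0 : f 0 = 2)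
    (h1 : f 1 = t) (hf : ∀ n, f (n + 2) = t * f (n + 1) - f n) : StrictMono fun n ↦ |f n| := by
  refine strictMono_nat_of_lt_succ fun n ↦ ?_
  induction n with
  | zero => simp only [h0, h1]; norm_num; omega
  | succ n ih =>
    have h := abs_sub_abs_le_abs_sub (t * f (n + 1)) (f n)
    rw [abs_mul, ← hf] at h
    nlinarith [abs_nonneg (f n)]

namespace Matrix

variable {R : Type*} [CommRing R] [Nontrivial R] {m : Matrix (Fin 2) (Fin 2) R}

lemma sq_eq_trace_smul_sub_one_of_det_eq_one (hm : m.det = 1) : m ^ 2 = m.trace • m - 1 := by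
  have h := m.aeval_self_charpoly
  rw [charpoly_fin_two, hm] at h
  simp only [map_add, map_sub, map_mul, map_pow, Polynomial.aeval_X, Polynomial.aeval_C,
    map_one, Algebra.algebraMap_eq_smul_one, smul_mul_assoc, one_mul] at h
  rw [← sub_eq_zero, ← h]
  abel

lemma trace_pow_add_two_of_det_eq_one (hm : m.det = 1) (n : ℕ) :
    (m ^ (n + 2)).trace = m.trace * (m ^ (n + 1)).trace - (m ^ n).trace := by
  rw [pow_add, sq_eq_trace_smul_sub_one_of_det_eq_one hm, mul_sub, mul_smul_comm, ← pow_succ,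
    mul_one, trace_sub, trace_smul, smul_eq_mul]

lemma pow_eq_of_det_eq_one_of_trace_eq_two (hm : m.det = 1) (ht : m.trace = 2) (n : ℕ) :
    m ^ n = (n : R) • m - ((n : R) - 1) • 1 := by
  induction n with
  | zero => simp
  | succ n ih =>
    rw [pow_succ, ih, sub_mul, smul_mul_assoc, smul_mul_assoc, one_mul, ← sq,
      sq_eq_trace_smul_sub_one_of_det_eq_one hm, ht]
    push_cast
    module

end Matrix

namespace ModularGroup

section Conjugation

variable (g M : SL(2, ℤ))

lemma det_entries : M 0 0 * M 1 1 - M 0 1 * M 1 0 = 1 := by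
  have := M.det_coe
  rwa [det_fin_two] at this

lemma trace_sq_sub_four :
    (↑ₘM).trace ^ 2 - 4 = (M 0 0 - M 1 1) ^ 2 + 4 * M 0 1 * M 1 0 := by
  rw [trace_fin_two]; linear_combination 4 * det_entries M

lemma conj_apply_one_zero : (g * M * g⁻¹) 1 0 =
    M 1 0 * g 1 1 ^ 2 + (M 0 0 - M 1 1) * g 1 0 * g 1 1 - M 0 1 * g 1 0 ^ 2 := by
  simp [coe_mul, coe_inv, adjugate_fin_two, mul_apply, Fin.sum_univ_two]
  ring

lemma trace_conj : (↑ₘ(g * M * g⁻¹)).trace = (↑ₘM).trace := by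
  rw [coe_mul, trace_mul_comm, ← coe_mul, inv_mul_cancel_left]

lemma trace_inv : (↑ₘM⁻¹).trace = (↑ₘM).trace := by
  simp [coe_inv, adjugate_fin_two, trace_fin_two, add_comm]

lemma inv_apply_one_zero : M⁻¹ 1 0 = -M 1 0 := by
  simp [coe_inv, adjugate_fin_two]

lemma T_zpow_conj_apply_one_zero (j : ℤ) : (T ^ j * M * (T ^ j)⁻¹) 1 0 = M 1 0 := by
  simp [conj_apply_one_zero, coe_T_zpow]

lemma T_zpow_conj_apply_sub (j : ℤ) :
    (T ^ j * M * (T ^ j)⁻¹) 0 0 - (T ^ j * M * (T ^ j)⁻¹) 1 1 =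
      M 0 0 - M 1 1 + 2 * j * M 1 0 := by
  simp [coe_mul, coe_inv, coe_T_zpow, adjugate_fin_two, mul_apply, Fin.sum_univ_two, vecMul,
    dotProduct]
  ring

lemma S_conj_apply_one_zero : (S * M * S⁻¹) 1 0 = -M 0 1 := by
  simp [conj_apply_one_zero]

variable {M}

lemma apply_one_zero_ne_zero (ht : (↑ₘM).trace ^ 2 < 4) : M 1 0 ≠ 0 := by
  intro hc
  have := trace_sq_sub_four M
  rw [hc] at this
  nlinarith [sq_nonneg (M 0 0 - M 1 1)]

lemma apply_one_zero_mul_conj_apply_one_zero_pos (ht : (↑ₘM).trace ^ 2 < 4) :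
    0 < M 1 0 * (g * M * g⁻¹) 1 0 := by
  have key : 4 * (M 1 0 * (g * M * g⁻¹) 1 0) =
      (2 * M 1 0 * g 1 1 + (M 0 0 - M 1 1) * g 1 0) ^ 2 + (4 - (↑ₘM).trace ^ 2) * g 1 0 ^ 2 := by
    rw [conj_apply_one_zero]; linear_combination g 1 0 ^ 2 * trace_sq_sub_four M
  by_cases hr : g 1 0 = 0
  · have hs : g 1 1 ≠ 0 := right_ne_zero_of_mul_eq_one (by simpa [hr] using det_entries g)
    have := mul_ne_zero (mul_ne_zero two_ne_zero (apply_one_zero_ne_zero ht)) hs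
    rw [hr] at key
    nlinarith [sq_pos_of_ne_zero this]
  · nlinarith [sq_pos_of_ne_zero hr, sq_nonneg (2 * M 1 0 * g 1 1 + (M 0 0 - M 1 1) * g 1 0)]

end Conjugation

variable {M N : SL(2, ℤ)}

lemma _root_.IsConj.trace_eq (h : IsConj M N) : (↑ₘM).trace = (↑ₘN).trace := by
  obtain ⟨g, rfl⟩ := isConj_iff.1 h
  exact (trace_conj g M).symm

lemma _root_.IsConj.apply_one_zero_pos_iff (h : IsConj M N) (ht : (↑ₘM).trace ^ 2 < 4) :
    0 < M 1 0 ↔ 0 < N 1 0 := by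
  obtain ⟨g, rfl⟩ := isConj_iff.1 h
  exact pos_iff_pos_of_mul_pos (apply_one_zero_mul_conj_apply_one_zero_pos g ht)

lemma exists_isConj_apply_one_zero_lt (ht : (↑ₘM).trace ^ 2 < 4) (hc : 1 < M 1 0) :
    ∃ N : SL(2, ℤ), IsConj M N ∧ 0 < N 1 0 ∧ N 1 0 < M 1 0 := by
  obtain ⟨j, hj⟩ := Int.exists_abs_add_two_mul_mul_le (M 0 0 - M 1 1) (by omega : 0 < M 1 0)
  set M' := T ^ j * M * (T ^ j)⁻¹
  have hc' : M' 1 0 = M 1 0 := T_zpow_conj_apply_one_zero M j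
  have hdiff : |M' 0 0 - M' 1 1| ≤ M' 1 0 := by rwa [T_zpow_conj_apply_sub, hc']
  have hdisc := trace_sq_sub_four M'
  rw [trace_conj] at hdisc
  obtain ⟨hlo, hhi⟩ := abs_le.1 hdiff
  refine ⟨S * M' * S⁻¹, (isConj_iff.2 ⟨_, rfl⟩).trans (isConj_iff.2 ⟨S, rfl⟩), ?_, ?_⟩ <;>
    rw [S_conj_apply_one_zero]
  · nlinarith
  · nlinarith

lemma isConj_S_mul_T_zpow_trace_of_apply_one_zero_eq_one (hc : M 1 0 = 1) :
    IsConj M (S * T ^ (↑ₘM).trace) := by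
  have hM := g_eq_of_c_eq_one hc
  rw [trace_fin_two]
  generalize M 0 0 = a, M 1 1 = d at hM ⊢
  subst hM
  exact isConj_iff.2 ⟨(T ^ a)⁻¹, by group⟩

lemma isConj_S_mul_T_zpow_trace (ht : (↑ₘM).trace ^ 2 < 4) (hc : 0 < M 1 0) :
    IsConj M (S * T ^ (↑ₘM).trace) := by
  induction hn : (M 1 0).toNat using Nat.strong_induction_on generalizing M with
  | _ n ih =>
  rcases (show M 1 0 = 1 ∨ 1 < M 1 0 by omega) with h1 | h1
  · exact isConj_S_mul_T_zpow_trace_of_apply_one_zero_eq_one h1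
  · obtain ⟨N, hMN, hN0, hNM⟩ := exists_isConj_apply_one_zero_lt ht h1
    rw [hMN.trace_eq] at ht ⊢
    exact hMN.trans (ih _ (by omega) ht hN0 rfl)

lemma isConj_of_trace_eq_of_apply_one_zero_pos (ht : (↑ₘM).trace ^ 2 < 4)
    (htr : (↑ₘM).trace = (↑ₘN).trace) (hM : 0 < M 1 0) (hN : 0 < N 1 0) : IsConj M N := by
  have h := isConj_S_mul_T_zpow_trace (M := N) (htr ▸ ht) hN
  rw [← htr] at h
  exact (isConj_S_mul_T_zpow_trace ht hM).trans h.symm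

theorem isConj_iff_of_trace_sq_lt_four (ht : (↑ₘM).trace ^ 2 < 4) :
    IsConj M N ↔ (↑ₘM).trace = (↑ₘN).trace ∧ (0 < M 1 0 ↔ 0 < N 1 0) := by
  refine ⟨fun h ↦ ⟨h.trace_eq, h.apply_one_zero_pos_iff ht⟩, fun ⟨htr, hpos⟩ ↦ ?_⟩
  have hM0 := apply_one_zero_ne_zero ht
  have hN0 := apply_one_zero_ne_zero (htr ▸ ht : (↑ₘN).trace ^ 2 < 4)
  by_cases hM : 0 < M 1 0
  · exact isConj_of_trace_eq_of_apply_one_zero_pos ht htr hM (hpos.1 hM)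
  · refine IsConj.of_inv (isConj_of_trace_eq_of_apply_one_zero_pos ?_ ?_ ?_ ?_) <;>
      simp only [trace_inv, inv_apply_one_zero] <;> omega

lemma abs_trace_le_two_of_isOfFinOrder (hfin : IsOfFinOrder M) : |(↑ₘM).trace| ≤ 2 := by
  obtain ⟨n, hn, hMn⟩ := isOfFinOrder_iff_pow_eq_one.1 hfin
  by_contra! h
  have hmono := Int.strictMono_abs_of_lucas (f := fun k ↦ (↑ₘM ^ k).trace) (by omega)
    (by simp) (by simp) (trace_pow_add_two_of_det_eq_one M.det_coe) hn
  simp [← coe_pow, hMn] at hmono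

lemma eq_one_of_isOfFinOrder_of_trace_eq_two (hfin : IsOfFinOrder M) (ht : (↑ₘM).trace = 2) :
    M = 1 := by
  obtain ⟨n, hn, hMn⟩ := isOfFinOrder_iff_pow_eq_one.1 hfin
  have h := pow_eq_of_det_eq_one_of_trace_eq_two M.det_coe ht n
  rw [← coe_pow, hMn, Matrix.SpecialLinearGroup.coe_one] at h
  have hsmul : (n : ℤ) • (↑ₘM - 1) = 0 :=
    calc (n : ℤ) • (↑ₘM - 1) = ((n : ℤ) • ↑ₘM - ((n : ℤ) - 1) • 1) - 1 := by module
      _ = 0 := by rw [← h, sub_self]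
  exact Subtype.ext (sub_eq_zero.1 ((smul_eq_zero.1 hsmul).resolve_left (by omega)))

lemma eq_neg_one_or_trace_sq_lt_four_of_isOfFinOrder (hM : M ≠ 1) (hfin : IsOfFinOrder M) :
    M = -1 ∨ (↑ₘM).trace ^ 2 < 4 := by
  have h := abs_le.1 (abs_trace_le_two_of_isOfFinOrder hfin)
  have hne : (↑ₘM).trace ≠ 2 := fun h2 ↦ hM (eq_one_of_isOfFinOrder_of_trace_eq_two hfin h2)
  by_cases hneg : (↑ₘM).trace = -2
  · left
    have hfin' : IsOfFinOrder (-M) := by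
      rw [← neg_one_mul]
      exact (Commute.neg_one_left M).isOfFinOrder_mul
        (isOfFinOrder_iff_pow_eq_one.2 ⟨2, two_pos, by simp⟩) hfin
    rw [← neg_eq_iff_eq_neg]
    exact eq_one_of_isOfFinOrder_of_trace_eq_two hfin' (by simp [coe_neg, hneg])
  · right
    have hlo := lt_of_le_of_ne h.1 (Ne.symm hneg)
    have hhi := lt_of_le_of_ne h.2 hne
    nlinarith

end ModularGroup

def torusPeriodicReps : Set SL(2, ℤ) :=
  {A * B, (A * B) ^ 2, (A * B) ^ 3, (A * B) ^ 4, (A * B) ^ 5, A ^ 2 * B, (A ^ 2 * B) ^ 3}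

lemma exists_mem_torusPeriodicReps_isConj {M : SL(2, ℤ)} (hM : M ≠ 1) (hfin : IsOfFinOrder M) :
    ∃ x ∈ torusPeriodicReps, IsConj M x := by
  rcases eq_neg_one_or_trace_sq_lt_four_of_isOfFinOrder hM hfin with rfl | ht
  · exact ⟨(A * B) ^ 3, by simp [torusPeriodicReps], by rw [show (A * B) ^ 3 = -1 by decide]⟩
  suffices ∃ x ∈ torusPeriodicReps, (↑ₘx).trace = (↑ₘM).trace ∧ (0 < x 1 0 ↔ 0 < M 1 0) by
    obtain ⟨x, hx, htr, hpos⟩ := this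
    exact ⟨x, hx, (isConj_iff_of_trace_sq_lt_four ht).2 ⟨htr.symm, hpos.symm⟩⟩
  have hlo : -1 ≤ (↑ₘM).trace := by nlinarith
  have hhi : (↑ₘM).trace ≤ 1 := by nlinarith
  generalize (↑ₘM).trace = t at hlo hhi
  generalize (0 < M 1 0) = p
  interval_cases t <;> by_cases hp : p
  exacts [⟨(A * B) ^ 4, by simp [torusPeriodicReps], by decide, iff_of_true (by decide) hp⟩,
    ⟨(A * B) ^ 2, by simp [torusPeriodicReps], by decide, iff_of_false (by decide) hp⟩,
    ⟨(A ^ 2 * B) ^ 3, by simp [torusPeriodicReps], by decide, iff_of_true (by decide) hp⟩,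
    ⟨A ^ 2 * B, by simp [torusPeriodicReps], by decide, iff_of_false (by decide) hp⟩,
    ⟨(A * B) ^ 5, by simp [torusPeriodicReps], by decide, iff_of_true (by decide) hp⟩,
    ⟨A * B, by simp [torusPeriodicReps], by decide, iff_of_false (by decide) hp⟩]

lemma eq_of_mem_torusPeriodicReps_of_isConj {x y : SL(2, ℤ)} (hx : x ∈ torusPeriodicReps)
    (hy : y ∈ torusPeriodicReps) (h : IsConj x y) : x = y := by
  have htr := h.trace_eq
  have hpos := h.apply_one_zero_pos_iff
  simp only [torusPeriodicReps, Set.mem_insert_iff, Set.mem_singleton_iff] at hx hy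
  rcases hx with rfl | rfl | rfl | rfl | rfl | rfl | rfl <;>
    rcases hy with rfl | rfl | rfl | rfl | rfl | rfl | rfl <;>
    revert htr hpos <;> decide

/-- Every nontrivial finite-order element of `SL(2,ℤ)` is conjugate to exactly one of the
seven elements `A·B`, `(A·B)²`, `(A·B)³`, `(A·B)⁴`, `(A·B)⁵`, `A²·B`, `(A²·B)³`. -/
theorem finite_order_conj_classes_SL2Z
    (M : Matrix.SpecialLinearGroup (Fin 2) ℤ) (hM : M ≠ 1) (hfin : IsOfFinOrder M) :
    ∃! x, x ∈ ({A * B, (A * B) ^ 2, (A * B) ^ 3, (A * B) ^ 4, (A * B) ^ 5,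
        A ^ 2 * B, (A ^ 2 * B) ^ 3} : Set (Matrix.SpecialLinearGroup (Fin 2) ℤ)) ∧
      IsConj M x := by
  obtain ⟨x, hx, hMx⟩ := exists_mem_torusPeriodicReps_isConj hM hfin
  exact ⟨x, ⟨hx, hMx⟩, fun y ⟨hy, hMy⟩ ↦
    eq_of_mem_torusPeriodicReps_of_isConj hy hx (hMy.symm.trans hMx)⟩
end
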